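/- Let H be a connected acyclic simple graph (a tree) on a vertex type V, and let E : V → V → ℝ be a matrix such that E i j = 0 whenever i and j are not adjacent in H and E i j = -E j i for all adjacent i, j. Then E is an additive no-arbitrage matrix over H; that is, antisymmetry on the edges is the sole restriction imposed by the no-arbitrage condition on a tree. -/

import Mathlib

/-- The sum of `E` over the consecutive edge steps of a walk `w` in `G`:
`∑_{i < length w} E v_i v_{i+1}`. -/
def walkSum {V : Type*} {G : SimpleGraph V} (E : V → V → ℝ) {u v : V} (w : G.Walk u v) : ℝ :=
  ∑ i ∈ Finset.range w.length, E (w.getVert i) (w.getVert (i + 1))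

/-- `E` is an additive no-arbitrage matrix over `G`: it vanishes on non-adjacent pairs and
its sum over the steps of every closed walk is zero. -/
def IsNoArbitrage {V : Type*} (G : SimpleGraph V) (E : V → V → ℝ) : Prop :=
  (∀ i j, ¬ G.Adj i j → E i j = 0) ∧ ∀ (v : V) (w : G.Walk v v), walkSum E w = 0

/-! A closed walk in an acyclic graph retracts, by `Walk.bypass`, onto the empty path. Each
cut-out detour in that retraction runs along an edge and straight back, so an edge-antisymmetric
`E` sums to zero over it; the sum over the closed walk is therefore the sum over the empty walk. -/

open SimpleGraph

section

variable {V : Type*} {G : SimpleGraph V}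

section walkSum

variable (E : V → V → ℝ)

@[simp]
lemma walkSum_nil {u : V} : walkSum E (Walk.nil : G.Walk u u) = 0 := by
  simp [walkSum]

@[simp]
lemma walkSum_cons {u v w : V} (h : G.Adj u v) (p : G.Walk v w) :
    walkSum E (Walk.cons h p) = E u v + walkSum E p := by
  rw [walkSum, walkSum, Walk.length_cons, Finset.sum_range_succ', add_comm]
  simp only [Walk.getVert_cons_succ, Walk.getVert_zero]

lemma walkSum_append {u v w : V} (p : G.Walk u v) (q : G.Walk v w) :
    walkSum E (p.append q) = walkSum E p + walkSum E q := by
  induction p with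
  | nil => simp
  | cons h p ih => rw [Walk.cons_append, walkSum_cons, walkSum_cons, ih, add_assoc]

end walkSum

lemma SimpleGraph.IsAcyclic.eq_cons_nil_of_isPath (hG : G.IsAcyclic) {u v : V}
    (h : G.Adj u v) {p : G.Walk u v} (hp : p.IsPath) : p = Walk.cons h Walk.nil :=
  congrArg Subtype.val <| (hG.subsingleton_path u v).elim ⟨p, hp⟩ (Path.singleton h)

lemma walkSum_bypass [DecidableEq V] (hG : G.IsAcyclic) {E : V → V → ℝ}
    (hanti : ∀ i j, G.Adj i j → E i j = -E j i) {u v : V} (p : G.Walk u v) :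
    walkSum E p.bypass = walkSum E p := by
  induction p with
  | nil => rfl
  | @cons u w v huw p ih =>
    rw [Walk.bypass]
    split_ifs with hu
    · have hback : p.bypass.takeUntil u hu = Walk.cons huw.symm Walk.nil :=
        hG.eq_cons_nil_of_isPath huw.symm (p.bypass_isPath.takeUntil hu)
      have hsplit : walkSum E p.bypass = E w u + walkSum E (p.bypass.dropUntil u hu) := by
        conv_lhs => rw [← p.bypass.take_spec hu]
        rw [walkSum_append, hback, walkSum_cons, walkSum_nil, add_zero]
      rw [walkSum_cons, ← ih, hsplit, hanti u w huw]
      ring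
    · rw [walkSum_cons, walkSum_cons, ih]

end

theorem tree_antisymm_no_arbitrage_general {V : Type*} (H : SimpleGraph V)
    (hac : H.IsAcyclic)
    (E : V → V → ℝ) (h0 : ∀ i j, ¬ H.Adj i j → E i j = 0)
    (hanti : ∀ i j, H.Adj i j → E i j = - E j i) :
    IsNoArbitrage H E := by
  classical
  refine ⟨h0, fun v w => ?_⟩
  rw [← walkSum_bypass hac hanti w, (Walk.isPath_iff_nil.mp w.bypass_isPath).eq_nil, walkSum_nil]

/-- On a tree, any matrix vanishing on non-edges and antisymmetric on edges is an additive
no-arbitrage matrix: antisymmetry is the sole restriction imposed by no-arbitrage. -/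
theorem tree_antisymm_no_arbitrage {V : Type*} (H : SimpleGraph V)
    (hconn : H.Connected) (hac : H.IsAcyclic)
    (E : V → V → ℝ) (h0 : ∀ i j, ¬ H.Adj i j → E i j = 0)
    (hanti : ∀ i j, H.Adj i j → E i j = - E j i) :
    IsNoArbitrage H E :=
  tree_antisymm_no_arbitrage_general H hac E h0 hanti
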